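/- Under the billiard polygon setup with h the support function of an ellipse with a₁ ≠ a₂ and under the Joachimsthal hypothesis, one has Σ_{i=1}^{n} cos 2ψᵢ = (L/J − n·(a₁² + a₂²))/(a₁² − a₂²). -/

import Mathlib

/-!
The edge of the polygon in direction `φᵢ` has length `⟪M_{i+1} - Mᵢ, u(φᵢ)⟫`, where
`u(φ) = (-sin φ, cos φ)`. Regrouping the perimeter around the vertices (a telescoping sum,
closed up by `M_{n+1} = M₁` and `φₙ = φ₀ + 2π`) gives
`L = ∑ ⟪Mᵢ, u(φᵢ₋₁) - u(φᵢ)⟫ = ∑ 2 sin δᵢ ⟪Mᵢ, (cos ψᵢ, sin ψᵢ)⟫ = 2 ∑ sin δᵢ h(ψᵢ)`,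
and the Joachimsthal relation turns this into `L = 2J ∑ h(ψᵢ)²`. For the ellipse,
`2h(ψ)² = a₁² + a₂² + (a₁² - a₂²) cos 2ψ`.
-/

open Real Finset

noncomputable section

def radialVec (θ : ℝ) : EuclideanSpace ℝ (Fin 2) := WithLp.toLp 2 ![cos θ, sin θ]

def tangentVec (θ : ℝ) : EuclideanSpace ℝ (Fin 2) := WithLp.toLp 2 ![-sin θ, cos θ]

lemma norm_tangentVec (θ : ℝ) : ‖tangentVec θ‖ = 1 := by
  rw [EuclideanSpace.norm_eq, Fin.sum_univ_two]
  simp [tangentVec, sin_sq_add_cos_sq]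

lemma inner_smul_radialVec_add_smul_tangentVec (a b θ : ℝ) :
    inner ℝ (a • radialVec θ + b • tangentVec θ) (radialVec θ) = a := by
  simp only [radialVec, tangentVec, EuclideanSpace.inner_eq_star_dotProduct, Fin.sum_univ_two,
    dotProduct, PiLp.add_apply, PiLp.smul_apply, star_trivial, smul_eq_mul,
    Matrix.cons_val_zero, Matrix.cons_val_one]
  linear_combination a * sin_sq_add_cos_sq θ

lemma tangentVec_sub_sub_tangentVec_add (ψ δ : ℝ) :
    tangentVec (ψ - δ) - tangentVec (ψ + δ) = (2 * sin δ) • radialVec ψ := by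
  ext j
  fin_cases j <;>
    simp [tangentVec, radialVec, sin_add, sin_sub, cos_add, cos_sub] <;> ring

lemma tangentVec_add_two_pi (θ : ℝ) : tangentVec (θ + 2 * π) = tangentVec θ := by
  simp [tangentVec]

lemma norm_eq_inner_of_eq_smul {E : Type*} [NormedAddCommGroup E] [InnerProductSpace ℝ E]
    {v u : E} {t : ℝ} (ht : 0 ≤ t) (hu : ‖u‖ = 1) (hv : v = t • u) :
    ‖v‖ = inner ℝ v u := by
  rw [hv, norm_smul, inner_smul_left, real_inner_self_eq_norm_sq, hu, Real.norm_of_nonneg ht]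
  simp

lemma perimeter_eq_sum_sin_mul_inner_radialVec (n : ℕ) (φ ψ δ : ℕ → ℝ)
    (hφ : φ n = φ 0 + 2 * π)
    (hψ : ∀ i ∈ Icc 1 n, ψ i = (φ (i - 1) + φ i) / 2)
    (hδ : ∀ i ∈ Icc 1 n, δ i = (φ i - φ (i - 1)) / 2)
    (M : ℕ → EuclideanSpace ℝ (Fin 2)) (hMwrap : M (n + 1) = M 1)
    (chord : ∀ i ∈ Icc 1 n, ∃ t : ℝ, 0 < t ∧ M (i + 1) - M i = t • tangentVec (φ i)) :
    ∑ i ∈ Icc 1 n, ‖M (i + 1) - M i‖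
      = ∑ i ∈ Icc 1 n, 2 * sin (δ i) * inner ℝ (M i) (radialVec (ψ i)) := by
  set g : ℕ → ℝ := fun j => inner ℝ (M j) (tangentVec (φ (j - 1)))
  have hedge : ∀ i ∈ Icc 1 n, ‖M (i + 1) - M i‖
      = (g (i + 1) - g i) + inner ℝ (M i) (tangentVec (φ (i - 1)) - tangentVec (φ i)) := by
    intro i hi
    obtain ⟨t, ht, hv⟩ := chord i hi
    rw [norm_eq_inner_of_eq_smul ht.le (norm_tangentVec _) hv, inner_sub_left, inner_sub_right]
    simp only [g, Nat.add_sub_cancel]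
    ring
  have htelescope : ∑ i ∈ Icc 1 n, (g (i + 1) - g i) = 0 := by
    rw [← Ico_add_one_right_eq_Icc, sum_Ico_sub g (by omega : 1 ≤ n + 1), sub_eq_zero]
    simp only [g, Nat.add_sub_cancel, Nat.sub_self, hMwrap, hφ, tangentVec_add_two_pi]
  rw [sum_congr rfl hedge, sum_add_distrib, htelescope, zero_add]
  refine sum_congr rfl fun i hi => ?_
  have hprev : φ (i - 1) = ψ i - δ i := by rw [hψ i hi, hδ i hi]; ring
  have hcur : φ i = ψ i + δ i := by rw [hψ i hi, hδ i hi]; ring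
  rw [hprev, hcur, tangentVec_sub_sub_tangentVec_add, inner_smul_right]

lemma two_mul_ellipse_support_sq (a₁ a₂ x : ℝ) :
    2 * sqrt (a₁ ^ 2 * cos x ^ 2 + a₂ ^ 2 * sin x ^ 2) ^ 2
      = a₁ ^ 2 + a₂ ^ 2 + (a₁ ^ 2 - a₂ ^ 2) * cos (2 * x) := by
  rw [sq_sqrt (by positivity), cos_two_mul]
  linear_combination 2 * a₂ ^ 2 * sin_sq_add_cos_sq x

end

theorem stmt_7_general
    (a₁ a₂ : ℝ) (ha₁ : 0 < a₁) (ha₂ : 0 < a₂)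
    (h : ℝ → ℝ)
    (hh : ∀ x : ℝ, h x = Real.sqrt (a₁ ^ 2 * Real.cos x ^ 2 + a₂ ^ 2 * Real.sin x ^ 2))
    (n : ℕ)
    (φ ψ δ : ℕ → ℝ)
    (hφ : φ n = φ 0 + 2 * Real.pi)
    (hψ : ∀ i ∈ Finset.Icc 1 n, ψ i = (φ (i - 1) + φ i) / 2)
    (hδ : ∀ i ∈ Finset.Icc 1 n, δ i = (φ i - φ (i - 1)) / 2)
    (M : ℕ → EuclideanSpace ℝ (Fin 2))
    (hM : ∀ i ∈ Finset.Icc 1 n, M i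
        = h (ψ i) • (WithLp.toLp 2 ![Real.cos (ψ i), Real.sin (ψ i)] : EuclideanSpace ℝ (Fin 2))
        + deriv h (ψ i) • (WithLp.toLp 2 ![-Real.sin (ψ i), Real.cos (ψ i)] : EuclideanSpace ℝ (Fin 2)))
    (hMwrap : M (n + 1) = M 1)
    (chord : ∀ i ∈ Finset.Icc 1 n, ∃ t : ℝ, 0 < t ∧
        M (i + 1) - M i = t • (WithLp.toLp 2 ![-Real.sin (φ i), Real.cos (φ i)] : EuclideanSpace ℝ (Fin 2)))
    (J : ℝ) (hJ : 0 < J)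
    (hJoach : ∀ i ∈ Finset.Icc 1 n, Real.sin (δ i) = J * h (ψ i))
    (ha : a₁ ≠ a₂)
    (L : ℝ) (hL : L = ∑ i ∈ Finset.Icc 1 n, ‖M (i + 1) - M i‖)
    : ∑ i ∈ Finset.Icc 1 n, Real.cos (2 * ψ i)
      = (L / J - n * (a₁ ^ 2 + a₂ ^ 2)) / (a₁ ^ 2 - a₂ ^ 2) := by
  have hperimeter : L = J * ∑ i ∈ Icc 1 n, 2 * h (ψ i) ^ 2 := by
    rw [hL, perimeter_eq_sum_sin_mul_inner_radialVec n φ ψ δ hφ hψ hδ M hMwrap chord, mul_sum]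
    refine sum_congr rfl fun i hi => ?_
    have hMi : M i = h (ψ i) • radialVec (ψ i) + deriv h (ψ i) • tangentVec (ψ i) := hM i hi
    rw [hMi, inner_smul_radialVec_add_smul_tangentVec, hJoach i hi]
    ring
  have hsq : a₁ ^ 2 - a₂ ^ 2 ≠ 0 :=
    sub_ne_zero.2 fun h₂ => ha ((sq_eq_sq₀ ha₁.le ha₂.le).1 h₂)
  simp only [hh, two_mul_ellipse_support_sq, sum_add_distrib, ← mul_sum, sum_const,
    Nat.card_Icc, Nat.add_sub_cancel, nsmul_eq_mul] at hperimeter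
  rw [hperimeter, eq_div_iff hsq]
  field_simp
  ring

/-- Corollary: `∑ cos 2ψᵢ = (L/J - n(a₁²+a₂²))/(a₁²-a₂²)`. -/
theorem stmt_7
    (a₁ a₂ : ℝ) (ha₁ : 0 < a₁) (ha₂ : 0 < a₂)
    (h : ℝ → ℝ)
    (hh : ∀ x : ℝ, h x = Real.sqrt (a₁ ^ 2 * Real.cos x ^ 2 + a₂ ^ 2 * Real.sin x ^ 2))
    (n : ℕ) (hn : 2 ≤ n)
    (φ ψ δ : ℕ → ℝ)
    (hφ : φ n = φ 0 + 2 * Real.pi)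
    (hψ : ∀ i ∈ Finset.Icc 1 n, ψ i = (φ (i - 1) + φ i) / 2)
    (hδ : ∀ i ∈ Finset.Icc 1 n, δ i = (φ i - φ (i - 1)) / 2)
    (M : ℕ → EuclideanSpace ℝ (Fin 2))
    (hM : ∀ i ∈ Finset.Icc 1 n, M i
        = h (ψ i) • (WithLp.toLp 2 ![Real.cos (ψ i), Real.sin (ψ i)] : EuclideanSpace ℝ (Fin 2))
        + deriv h (ψ i) • (WithLp.toLp 2 ![-Real.sin (ψ i), Real.cos (ψ i)] : EuclideanSpace ℝ (Fin 2)))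
    (hMwrap : M (n + 1) = M 1)
    (chord : ∀ i ∈ Finset.Icc 1 n, ∃ t : ℝ, 0 < t ∧
        M (i + 1) - M i = t • (WithLp.toLp 2 ![-Real.sin (φ i), Real.cos (φ i)] : EuclideanSpace ℝ (Fin 2)))
    (J : ℝ) (hJ : 0 < J)
    (hJoach : ∀ i ∈ Finset.Icc 1 n, Real.sin (δ i) = J * h (ψ i))
    (ha : a₁ ≠ a₂)
    (L : ℝ) (hL : L = ∑ i ∈ Finset.Icc 1 n, ‖M (i + 1) - M i‖)
    : ∑ i ∈ Finset.Icc 1 n, Real.cos (2 * ψ i)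
      = (L / J - n * (a₁ ^ 2 + a₂ ^ 2)) / (a₁ ^ 2 - a₂ ^ 2) :=
  stmt_7_general a₁ a₂ ha₁ ha₂ h hh n φ ψ δ hφ hψ hδ M hM hMwrap chord J hJ hJoach ha L hL
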